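/- Let γ ∈ (0, √2) and let α be real with −γ < α < −γ/2. Then both of the following integrals converge absolutely and are equal: ∫_{−1}^{0} ∫_{0}^{1} |x₁|^{−γα/2 − 1} |x₂|^{−γα/2 − 1} |x₂ − x₁|^{−γ²/2} (1 − x₁)^{−1 + γ²/2 + γα/2} (1 − x₂)^{−1 + γ²/2 + γα/2} dx₁ dx₂ = 2^{γ²/2 + γα} · ∫_{0}^{1} ∫_{1}^{∞} |1 − t₁|^{−γα/2 − 1} |1 − t₂|^{−γα/2 − 1} |t₁ − t₂|^{−γ²/2} dt₁ dt₂. (The change of variables is the Möbius map x = (t−1)/(t+1).) -/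

import Mathlib

/-!
The Möbius map `x = (t - 1) / (t + 1)` sends `(0, 1)` onto `(-1, 0)` and `(1, ∞)` onto `(0, 1)`,
with `|x| = |1 - t| / (t + 1)`, `1 - x = 2 / (t + 1)`,
`x₂ - x₁ = 2 (t₂ - t₁) / ((t₁ + 1) (t₂ + 1))` and `dx = 2 dt / (t + 1) ^ 2`. The exponents
`a = -γα/2 - 1`, `b = -γ²/2`, `c = -1 + γ²/2 + γα/2` of the left integrand satisfy `a + b + c = -2`,
so after the substitution every power of `t₁ + 1` and `t₂ + 1` cancels and only the constant
`2 ^ (γ²/2 + γα)` survives; the two integrals then correspond under the change of variables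
formula, integrability included.

The right integral converges absolutely because `(t₂ - t₁)² ≥ (1 - t₁) t₂ (t₂ - 1)` bounds its
integrand by the product `(1 - t₁) ^ P * ((t₂ - 1) ^ P * t₂ ^ (-γ²/4))` with
`P = -γα/2 - 1 - γ²/4`; the hypotheses `-γ < α < -γ/2` say exactly `-1 < P` and `P - γ²/4 < -1`.
-/

open MeasureTheory Set

noncomputable def lhsIntegrand (γ α : ℝ) (p : ℝ × ℝ) : ℝ :=
  |p.1| ^ (-(γ * α) / 2 - 1) * |p.2| ^ (-(γ * α) / 2 - 1) *
    |p.2 - p.1| ^ (-(γ ^ 2) / 2) *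
    (1 - p.1) ^ (-1 + γ ^ 2 / 2 + γ * α / 2) *
    (1 - p.2) ^ (-1 + γ ^ 2 / 2 + γ * α / 2)

noncomputable def rhsIntegrand (γ α : ℝ) (p : ℝ × ℝ) : ℝ :=
  |1 - p.1| ^ (-(γ * α) / 2 - 1) * |1 - p.2| ^ (-(γ * α) / 2 - 1) *
    |p.1 - p.2| ^ (-(γ ^ 2) / 2)

section ProdMap

variable {f g f' g' : ℝ → ℝ} {s t : Set ℝ}

theorem ContinuousLinearMap.det_prodMap_smulRight (a b : ℝ) :
    (((1 : ℝ →L[ℝ] ℝ).smulRight a).prodMap ((1 : ℝ →L[ℝ] ℝ).smulRight b)).det = a * b := by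
  simp [ContinuousLinearMap.det, LinearMap.det_prodMap]

theorem hasFDerivWithinAt_prodMap_of_hasDerivWithinAt
    (hf : ∀ x ∈ s, HasDerivWithinAt f (f' x) s x) (hg : ∀ y ∈ t, HasDerivWithinAt g (g' y) t y) :
    ∀ p ∈ s ×ˢ t, HasFDerivWithinAt (Prod.map f g)
      (((1 : ℝ →L[ℝ] ℝ).smulRight (f' p.1)).prodMap ((1 : ℝ →L[ℝ] ℝ).smulRight (g' p.2)))
      (s ×ˢ t) p := fun p hp =>
  HasFDerivWithinAt.prodMap p ((hf p.1 hp.1).hasFDerivWithinAt.mono (fst_image_prod_subset s t))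
    ((hg p.2 hp.2).hasFDerivWithinAt.mono (snd_image_prod_subset s t))

theorem integrableOn_image_prodMap_iff (hs : MeasurableSet s) (ht : MeasurableSet t)
    (hf : ∀ x ∈ s, HasDerivWithinAt f (f' x) s x) (hg : ∀ y ∈ t, HasDerivWithinAt g (g' y) t y)
    (hfi : InjOn f s) (hgi : InjOn g t) (h : ℝ × ℝ → ℝ) :
    IntegrableOn h ((f '' s) ×ˢ (g '' t)) ↔
      IntegrableOn (fun p => |f' p.1 * g' p.2| * h (Prod.map f g p)) (s ×ˢ t) := by
  rw [prod_image_image_eq]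
  refine (integrableOn_image_iff_integrableOn_abs_det_fderiv_smul volume (hs.prod ht)
    (hasFDerivWithinAt_prodMap_of_hasDerivWithinAt hf hg) (hfi.prodMap hgi) h).trans ?_
  simp only [ContinuousLinearMap.det_prodMap_smulRight, smul_eq_mul]

theorem integral_image_prodMap_eq (hs : MeasurableSet s) (ht : MeasurableSet t)
    (hf : ∀ x ∈ s, HasDerivWithinAt f (f' x) s x) (hg : ∀ y ∈ t, HasDerivWithinAt g (g' y) t y)
    (hfi : InjOn f s) (hgi : InjOn g t) (h : ℝ × ℝ → ℝ) :
    ∫ p in (f '' s) ×ˢ (g '' t), h p = ∫ p in s ×ˢ t, |f' p.1 * g' p.2| * h (Prod.map f g p) := by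
  rw [prod_image_image_eq]
  refine (integral_image_eq_integral_abs_det_fderiv_smul volume (hs.prod ht)
    (hasFDerivWithinAt_prodMap_of_hasDerivWithinAt hf hg) (hfi.prodMap hgi) h).trans ?_
  simp only [ContinuousLinearMap.det_prodMap_smulRight, smul_eq_mul]

end ProdMap

noncomputable def mobius (t : ℝ) : ℝ := (t - 1) / (t + 1)

section Mobius

variable {t t₁ t₂ : ℝ}

theorem hasDerivAt_mobius (ht : t + 1 ≠ 0) : HasDerivAt mobius (2 / (t + 1) ^ 2) t :=
  (((hasDerivAt_id' t).sub_const 1).div ((hasDerivAt_id' t).add_const 1) ht).congr_deriv (by ring)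

theorem injOn_mobius : InjOn mobius (Ioi (-1)) := by
  intro x hx y hy h
  have hx : x + 1 ≠ 0 := by linarith [mem_Ioi.1 hx]
  have hy : y + 1 ≠ 0 := by linarith [mem_Ioi.1 hy]
  rw [mobius, mobius, div_eq_div_iff hx hy] at h
  linarith

theorem mobius_div_one_sub {x : ℝ} (hx : x ≠ 1) : mobius ((1 + x) / (1 - x)) = x := by
  have hx : 1 - x ≠ 0 := sub_ne_zero.2 hx.symm
  rw [mobius]
  field_simp
  ring

theorem mobius_image_Ioo_zero_one : mobius '' Ioo 0 1 = Ioo (-1) 0 := by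
  ext x
  constructor
  · rintro ⟨t, ⟨ht0, ht1⟩, rfl⟩
    have ht : 0 < t + 1 := by linarith
    exact ⟨by rw [mobius, lt_div_iff₀ ht]; linarith, div_neg_of_neg_of_pos (by linarith) ht⟩
  · rintro ⟨hx1, hx0⟩
    refine ⟨(1 + x) / (1 - x), ⟨div_pos (by linarith) (by linarith), ?_⟩,
      mobius_div_one_sub (by linarith)⟩
    rw [div_lt_one (by linarith)]
    linarith

theorem mobius_image_Ioi_one : mobius '' Ioi 1 = Ioo 0 1 := by
  ext x
  constructor
  · rintro ⟨t, ht, rfl⟩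
    have ht' : 0 < t + 1 := by linarith [mem_Ioi.1 ht]
    exact ⟨div_pos (by linarith [mem_Ioi.1 ht]) ht', by rw [mobius, div_lt_one ht']; linarith⟩
  · rintro ⟨hx0, hx1⟩
    refine ⟨(1 + x) / (1 - x), ?_, mobius_div_one_sub hx1.ne⟩
    rw [mem_Ioi, lt_div_iff₀ (by linarith)]
    linarith

theorem abs_mobius (ht : -1 < t) : |mobius t| = |1 - t| / (t + 1) := by
  rw [mobius, abs_div, abs_sub_comm, abs_of_pos (by linarith : 0 < t + 1)]

theorem one_sub_mobius (ht : t + 1 ≠ 0) : 1 - mobius t = 2 / (t + 1) := by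
  rw [mobius]
  field_simp
  ring

theorem mobius_sub_mobius (h₁ : t₁ + 1 ≠ 0) (h₂ : t₂ + 1 ≠ 0) :
    mobius t₂ - mobius t₁ = 2 * (t₂ - t₁) / ((t₁ + 1) * (t₂ + 1)) := by
  rw [mobius, mobius]
  field_simp
  ring

end Mobius

theorem mul_div_rpow_mobius_weight {u v X Y W a b c : ℝ} (hu : 0 < u) (hv : 0 < v) (hX : 0 ≤ X)
    (hY : 0 ≤ Y) (hW : 0 ≤ W) (habc : a + b + c = -2) :
    2 / u ^ 2 * (2 / v ^ 2) *
        ((X / u) ^ a * (Y / v) ^ a * (2 * W / (u * v)) ^ b * (2 / u) ^ c * (2 / v) ^ c) =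
      (2 : ℝ) ^ (-2 - 2 * a - b) * (X ^ a * Y ^ a * W ^ b) := by
  obtain rfl : c = -2 - a - b := by linarith
  have h2 : (0 : ℝ) < 2 := two_pos
  simp only [Real.div_rpow, Real.mul_rpow, Real.rpow_sub, Real.rpow_neg, Real.rpow_two, hX, hY, hW,
    hu, hv, hu.le, hv.le, h2, h2.le, mul_nonneg]
  field_simp
  rw [mul_comm 2 a, Real.rpow_mul h2.le, Real.rpow_two]

theorem abs_mul_lhsIntegrand_mobius (γ α : ℝ) {t₁ t₂ : ℝ} (h₁ : -1 < t₁) (h₂ : -1 < t₂) :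
    |2 / (t₁ + 1) ^ 2 * (2 / (t₂ + 1) ^ 2)| * lhsIntegrand γ α (Prod.map mobius mobius (t₁, t₂)) =
      2 ^ (γ ^ 2 / 2 + γ * α) * rhsIntegrand γ α (t₁, t₂) := by
  have hu : 0 < t₁ + 1 := by linarith
  have hv : 0 < t₂ + 1 := by linarith
  have habs : |mobius t₂ - mobius t₁| = 2 * |t₁ - t₂| / ((t₁ + 1) * (t₂ + 1)) := by
    rw [mobius_sub_mobius hu.ne' hv.ne', abs_div, abs_mul, abs_two, abs_sub_comm,
      abs_of_pos (mul_pos hu hv)]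
  rw [show γ ^ 2 / 2 + γ * α = -2 - 2 * (-(γ * α) / 2 - 1) - -(γ ^ 2) / 2 by ring,
    abs_of_pos (by positivity), lhsIntegrand, rhsIntegrand, Prod.map, abs_mobius h₁, abs_mobius h₂,
    habs, one_sub_mobius hu.ne', one_sub_mobius hv.ne']
  exact mul_div_rpow_mobius_weight hu hv (abs_nonneg _) (abs_nonneg _) (abs_nonneg _)
    (a := -(γ * α) / 2 - 1) (b := -(γ ^ 2) / 2) (c := -1 + γ ^ 2 / 2 + γ * α / 2) (by ring)

section MobiusChangeOfVariables

variable {s t : Set ℝ}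

theorem hasDerivWithinAt_mobius (hs : s ⊆ Ioi (-1)) :
    ∀ x ∈ s, HasDerivWithinAt mobius (2 / (x + 1) ^ 2) s x := fun x hx =>
  (hasDerivAt_mobius (by linarith [mem_Ioi.1 (hs hx)])).hasDerivWithinAt

theorem integrableOn_mobius_image_prod_iff (hs : MeasurableSet s) (ht : MeasurableSet t)
    (hs' : s ⊆ Ioi (-1)) (ht' : t ⊆ Ioi (-1)) (h : ℝ × ℝ → ℝ) :
    IntegrableOn h ((mobius '' s) ×ˢ (mobius '' t)) ↔
      IntegrableOn (fun p => |2 / (p.1 + 1) ^ 2 * (2 / (p.2 + 1) ^ 2)| *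
        h (Prod.map mobius mobius p)) (s ×ˢ t) :=
  integrableOn_image_prodMap_iff hs ht (hasDerivWithinAt_mobius hs') (hasDerivWithinAt_mobius ht')
    (injOn_mobius.mono hs') (injOn_mobius.mono ht') h

theorem integral_mobius_image_prod (hs : MeasurableSet s) (ht : MeasurableSet t)
    (hs' : s ⊆ Ioi (-1)) (ht' : t ⊆ Ioi (-1)) (h : ℝ × ℝ → ℝ) :
    ∫ p in (mobius '' s) ×ˢ (mobius '' t), h p =
      ∫ p in s ×ˢ t, |2 / (p.1 + 1) ^ 2 * (2 / (p.2 + 1) ^ 2)| * h (Prod.map mobius mobius p) :=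
  integral_image_prodMap_eq hs ht (hasDerivWithinAt_mobius hs') (hasDerivWithinAt_mobius ht')
    (injOn_mobius.mono hs') (injOn_mobius.mono ht') h

end MobiusChangeOfVariables

theorem abs_rpow_le_rpow_half_mul_rpow_half {x y z b : ℝ} (hx : 0 < x) (hy : 0 < y) (hb : b ≤ 0)
    (h : x * y ≤ z ^ 2) : |z| ^ b ≤ x ^ (b / 2) * y ^ (b / 2) :=
  calc |z| ^ b = (z ^ 2) ^ (b / 2) := by
        rw [← sq_abs, ← Real.rpow_natCast, ← Real.rpow_mul (abs_nonneg z)]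
        ring_nf
    _ ≤ (x * y) ^ (b / 2) := Real.rpow_le_rpow_of_nonpos (mul_pos hx hy) h (by linarith)
    _ = x ^ (b / 2) * y ^ (b / 2) := Real.mul_rpow hx.le hy.le

theorem rhsIntegrand_le (γ α : ℝ) {p : ℝ × ℝ} (hp : p ∈ Ioo 0 1 ×ˢ Ioi 1) :
    rhsIntegrand γ α p ≤ (1 - p.1) ^ (-(γ * α) / 2 - 1 - γ ^ 2 / 4) *
      ((p.2 - 1) ^ (-(γ * α) / 2 - 1 - γ ^ 2 / 4) * p.2 ^ (-(γ ^ 2) / 4)) := by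
  obtain ⟨⟨h₁, h₁'⟩, h₂⟩ := hp
  have h₂ : 1 < p.2 := h₂
  have hx : 0 < 1 - p.1 := by linarith
  have hy : 0 < p.2 - 1 := by linarith
  -- `p.2 - p.1` dominates both `p.2 * (1 - p.1)` and `p.2 - 1`
  have hsq : (1 - p.1) * (p.2 * (p.2 - 1)) ≤ (p.1 - p.2) ^ 2 := by
    nlinarith [mul_pos h₁ hy]
  have hcross := abs_rpow_le_rpow_half_mul_rpow_half (b := -(γ ^ 2) / 2) hx
    (mul_pos (by linarith) hy) (by nlinarith [sq_nonneg γ]) hsq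
  rw [rhsIntegrand, abs_of_pos hx, abs_of_neg (by linarith : 1 - p.2 < 0), neg_sub]
  calc _ ≤ (1 - p.1) ^ (-(γ * α) / 2 - 1) * (p.2 - 1) ^ (-(γ * α) / 2 - 1) *
          ((1 - p.1) ^ (-(γ ^ 2) / 2 / 2) * (p.2 * (p.2 - 1)) ^ (-(γ ^ 2) / 2 / 2)) := by
        gcongr
    _ = _ := by
        rw [Real.mul_rpow (by linarith) hy.le, sub_eq_add_neg _ (γ ^ 2 / 4), Real.rpow_add hx,
          Real.rpow_add hy]
        ring_nf

theorem integrableOn_one_sub_rpow {P : ℝ} (hP : -1 < P) :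
    IntegrableOn (fun t : ℝ => (1 - t) ^ P) (Ioo 0 1) := by
  have h := ((intervalIntegral.intervalIntegrable_rpow' hP (a := 0) (b := 1)).comp_sub_left 1).symm
  norm_num at h
  rwa [intervalIntegrable_iff_integrableOn_Ioo_of_le zero_le_one] at h

theorem integrableOn_sub_one_rpow_mul_rpow {P Q : ℝ} (hP : -1 < P) (hQ : Q ≤ 0)
    (hPQ : P + Q < -1) : IntegrableOn (fun t : ℝ => (t - 1) ^ P * t ^ Q) (Ioi 1) := by
  have hmeas : AEStronglyMeasurable (fun t : ℝ => (t - 1) ^ P * t ^ Q) := by fun_prop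
  have hnear : IntegrableOn (fun t : ℝ => (t - 1) ^ P * t ^ Q) (Ioc 1 2) := by
    have h := (intervalIntegral.intervalIntegrable_rpow' hP (a := 0) (b := 1)).comp_sub_right 1
    norm_num at h
    rw [intervalIntegrable_iff_integrableOn_Ioc_of_le one_le_two] at h
    refine h.mono' hmeas.restrict ((ae_restrict_iff' measurableSet_Ioc).2 (ae_of_all _ ?_))
    rintro t ⟨ht, -⟩
    have ht' : 0 < t - 1 := by linarith
    rw [Real.norm_of_nonneg (by positivity)]
    exact mul_le_of_le_one_right (by positivity)
      (Real.rpow_le_one_of_one_le_of_nonpos ht.le hQ)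
  have hfar : IntegrableOn (fun t : ℝ => (t - 1) ^ P * t ^ Q) (Ioi 2) := by
    refine ((integrableOn_Ioi_rpow_of_lt hPQ two_pos).const_mul ((2 : ℝ) ^ (-(P + Q)))).mono'
      hmeas.restrict ((ae_restrict_iff' measurableSet_Ioi).2 (ae_of_all _ ?_))
    intro t ht
    have ht : 2 < t := ht
    have ht' : 0 < t - 1 := by linarith
    rw [Real.norm_of_nonneg (by positivity)]
    calc (t - 1) ^ P * t ^ Q ≤ (t - 1) ^ P * (t - 1) ^ Q :=
          mul_le_mul_of_nonneg_left (Real.rpow_le_rpow_of_nonpos ht' (by linarith) hQ)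
            (by positivity)
      _ = (t - 1) ^ (P + Q) := (Real.rpow_add ht' P Q).symm
      _ ≤ (t / 2) ^ (P + Q) :=
          Real.rpow_le_rpow_of_nonpos (by positivity) (by linarith) (by linarith)
      _ = 2 ^ (-(P + Q)) * t ^ (P + Q) := by
          rw [Real.div_rpow (by positivity) zero_le_two, Real.rpow_neg zero_le_two, div_eq_inv_mul]
  rw [← Ioc_union_Ioi_eq_Ioi one_le_two]
  exact hnear.union hfar

theorem integrableOn_rhsIntegrand {γ α : ℝ} (h₁ : -(γ ^ 2) < γ * α) (h₂ : γ * α < -(γ ^ 2) / 2) :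
    IntegrableOn (rhsIntegrand γ α) (Ioo 0 1 ×ˢ Ioi 1) := by
  have hP : -1 < -(γ * α) / 2 - 1 - γ ^ 2 / 4 := by linarith
  have hPQ : -(γ * α) / 2 - 1 - γ ^ 2 / 4 + -(γ ^ 2) / 4 < -1 := by linarith
  have hdom : IntegrableOn (fun p : ℝ × ℝ => (1 - p.1) ^ (-(γ * α) / 2 - 1 - γ ^ 2 / 4) *
      ((p.2 - 1) ^ (-(γ * α) / 2 - 1 - γ ^ 2 / 4) * p.2 ^ (-(γ ^ 2) / 4))) (Ioo 0 1 ×ˢ Ioi 1) := by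
    rw [IntegrableOn, Measure.volume_eq_prod, ← Measure.prod_restrict]
    exact (integrableOn_one_sub_rpow hP).mul_prod
      (integrableOn_sub_one_rpow_mul_rpow hP (by nlinarith) hPQ)
  refine hdom.mono' (by unfold rhsIntegrand; fun_prop)
    ((ae_restrict_iff' (measurableSet_Ioo.prod measurableSet_Ioi)).2 (ae_of_all _ fun p hp => ?_))
  rw [Real.norm_of_nonneg (by unfold rhsIntegrand; positivity)]
  exact rhsIntegrand_le γ α hp

theorem stmt7_general (γ : ℝ) (hγ0 : 0 < γ)
    (α : ℝ) (hα1 : -γ < α) (hα2 : α < -γ / 2) :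
    IntegrableOn (lhsIntegrand γ α) ((Ioo (-1 : ℝ) 0) ×ˢ (Ioo (0 : ℝ) 1)) volume ∧
    IntegrableOn (rhsIntegrand γ α) ((Ioo (0 : ℝ) 1) ×ˢ (Ioi (1 : ℝ))) volume ∧
    (∫ p in (Ioo (-1 : ℝ) 0) ×ˢ (Ioo (0 : ℝ) 1), lhsIntegrand γ α p) =
      (2 : ℝ) ^ (γ ^ 2 / 2 + γ * α) *
        ∫ p in (Ioo (0 : ℝ) 1) ×ˢ (Ioi (1 : ℝ)), rhsIntegrand γ α p := by
  have hrhs := integrableOn_rhsIntegrand (γ := γ) (α := α) (by nlinarith) (by nlinarith)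
  have hs : MeasurableSet (Ioo (0 : ℝ) 1) := measurableSet_Ioo
  have ht : MeasurableSet (Ioi (1 : ℝ)) := measurableSet_Ioi
  have hs' : Ioo (0 : ℝ) 1 ⊆ Ioi (-1) := Ioo_subset_Ioi_self.trans (Ioi_subset_Ioi (by norm_num))
  have ht' : Ioi (1 : ℝ) ⊆ Ioi (-1) := Ioi_subset_Ioi (by norm_num)
  have himage : (mobius '' Ioo 0 1) ×ˢ (mobius '' Ioi 1) = Ioo (-1 : ℝ) 0 ×ˢ Ioo (0 : ℝ) 1 := by
    rw [mobius_image_Ioo_zero_one, mobius_image_Ioi_one]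
  have hweight : EqOn
      (fun p => |2 / (p.1 + 1) ^ 2 * (2 / (p.2 + 1) ^ 2)| *
        lhsIntegrand γ α (Prod.map mobius mobius p))
      (fun p => 2 ^ (γ ^ 2 / 2 + γ * α) * rhsIntegrand γ α p) (Ioo 0 1 ×ˢ Ioi 1) := fun p hp =>
    abs_mul_lhsIntegrand_mobius γ α (hs' hp.1) (ht' hp.2)
  rw [← himage]
  refine ⟨?_, hrhs, ?_⟩
  · rw [integrableOn_mobius_image_prod_iff hs ht hs' ht',
      integrableOn_congr_fun hweight (hs.prod ht)]
    exact hrhs.const_mul _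
  · rw [integral_mobius_image_prod hs ht hs' ht', setIntegral_congr_fun (hs.prod ht) hweight,
      integral_const_mul]

theorem stmt7 (γ : ℝ) (hγ0 : 0 < γ) (hγ2 : γ < Real.sqrt 2)
    (α : ℝ) (hα1 : -γ < α) (hα2 : α < -γ / 2) :
    IntegrableOn (lhsIntegrand γ α) ((Ioo (-1 : ℝ) 0) ×ˢ (Ioo (0 : ℝ) 1)) volume ∧
    IntegrableOn (rhsIntegrand γ α) ((Ioo (0 : ℝ) 1) ×ˢ (Ioi (1 : ℝ))) volume ∧
    (∫ p in (Ioo (-1 : ℝ) 0) ×ˢ (Ioo (0 : ℝ) 1), lhsIntegrand γ α p) =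
      (2 : ℝ) ^ (γ ^ 2 / 2 + γ * α) *
        ∫ p in (Ioo (0 : ℝ) 1) ×ˢ (Ioi (1 : ℝ)), rhsIntegrand γ α p :=
  stmt7_general γ hγ0 α hα1 hα2
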